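/- For every monotone tuple (X_1,...,X_n) of subsets of {1,...,n}, there exists a unique monoid endomorphism φ of Kiselman's semigroup K_n with φ(a_i) = e_{X_i} for all i. -/

import Mathlib

def kiselmanRel (n : ℕ) : FreeMonoid (Fin n) → FreeMonoid (Fin n) → Prop := fun w v =>
  (∃ i : Fin n, w = .of i * .of i ∧ v = .of i) ∨
  (∃ i j : Fin n, i < j ∧ w = .of i * .of j * .of i ∧ v = .of j * .of i) ∨
  (∃ i j : Fin n, i < j ∧ w = .of j * .of i * .of j ∧ v = .of j * .of i)

abbrev Kiselman (n : ℕ) := PresentedMonoid (kiselmanRel n)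

def kGen (n : ℕ) (i : Fin n) : Kiselman n := PresentedMonoid.of (kiselmanRel n) i

def eSet (n : ℕ) (X : Finset (Fin n)) : Kiselman n :=
  ((X.sort (· ≤ ·)).reverse.map (kGen n)).prod

variable {n : ℕ}

lemma krel {w v : FreeMonoid (Fin n)} (h : kiselmanRel n w v) :
    PresentedMonoid.mk (kiselmanRel n) w = PresentedMonoid.mk (kiselmanRel n) v :=
  Quotient.sound (ConGen.Rel.of _ _ h)

lemma gen_sq (i : Fin n) : kGen n i * kGen n i = kGen n i := by
  have := krel (n := n) (Or.inl ⟨i, rfl, rfl⟩)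
  simpa [kGen, PresentedMonoid.of, map_mul] using this

lemma gen_rel1 {i j : Fin n} (h : i < j) :
    kGen n i * kGen n j * kGen n i = kGen n j * kGen n i := by
  have := krel (n := n) (Or.inr (Or.inl ⟨i, j, h, rfl, rfl⟩))
  simpa [kGen, PresentedMonoid.of, map_mul] using this

lemma gen_rel2 {i j : Fin n} (h : i < j) :
    kGen n j * kGen n i * kGen n j = kGen n j * kGen n i := by
  have := krel (n := n) (Or.inr (Or.inr ⟨i, j, h, rfl, rfl⟩))
  simpa [kGen, PresentedMonoid.of, map_mul] using this

def wProd (n : ℕ) (l : List (Fin n)) : Kiselman n := (l.map (kGen n)).prod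

@[simp] lemma wProd_nil : wProd n [] = 1 := rfl
@[simp] lemma wProd_cons (a : Fin n) (l) : wProd n (a :: l) = kGen n a * wProd n l := by
  simp [wProd]
@[simp] lemma wProd_append (l₁ l₂ : List (Fin n)) :
    wProd n (l₁ ++ l₂) = wProd n l₁ * wProd n l₂ := by simp [wProd]
@[simp] lemma wProd_singleton (a : Fin n) : wProd n [a] = kGen n a := by simp [wProd]

/-- If all letters of `l` exceed `i`, then `aᵢ (∏l) aᵢ = (∏l) aᵢ`. -/
lemma hi_word (i : Fin n) (l : List (Fin n)) (h : ∀ x ∈ l, i < x) :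
    kGen n i * wProd n l * kGen n i = wProd n l * kGen n i := by
  induction l using List.reverseRecOn with
  | nil => simpa using gen_sq i
  | append_singleton l a ih =>
    have ha : i < a := h a (by simp)
    have hl : ∀ x ∈ l, i < x := fun x hx => h x (by simp [hx])
    calc kGen n i * wProd n (l ++ [a]) * kGen n i
        = kGen n i * wProd n l * (kGen n a * kGen n i) := by
          simp [mul_assoc]
      _ = kGen n i * wProd n l * (kGen n i * kGen n a * kGen n i) := by
          rw [gen_rel1 ha]
      _ = (kGen n i * wProd n l * kGen n i) * (kGen n a * kGen n i) := by
          simp [mul_assoc]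
      _ = wProd n l * kGen n i * (kGen n a * kGen n i) := by rw [ih hl]
      _ = wProd n l * (kGen n i * kGen n a * kGen n i) := by simp [mul_assoc]
      _ = wProd n l * (kGen n a * kGen n i) := by rw [gen_rel1 ha]
      _ = wProd n (l ++ [a]) * kGen n i := by simp [mul_assoc]

/-- If all letters of `l` are below `i`, then `aᵢ (∏l) aᵢ = aᵢ (∏l)`. -/
lemma lo_word (i : Fin n) (l : List (Fin n)) (h : ∀ x ∈ l, x < i) :
    kGen n i * wProd n l * kGen n i = kGen n i * wProd n l := by
  induction l with
  | nil => simpa using gen_sq i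
  | cons a l ih =>
    have ha : a < i := h a (by simp)
    have hl : ∀ x ∈ l, x < i := fun x hx => h x (by simp [hx])
    calc kGen n i * wProd n (a :: l) * kGen n i
        = (kGen n i * kGen n a) * (wProd n l * kGen n i) := by simp [mul_assoc]
      _ = (kGen n i * kGen n a * kGen n i) * (wProd n l * kGen n i) := by
          rw [gen_rel2 ha]
      _ = (kGen n i * kGen n a) * (kGen n i * wProd n l * kGen n i) := by
          simp [mul_assoc]
      _ = (kGen n i * kGen n a) * (kGen n i * wProd n l) := by rw [ih hl]
      _ = (kGen n i * kGen n a * kGen n i) * wProd n l := by simp [mul_assoc]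
      _ = (kGen n i * kGen n a) * wProd n l := by rw [gen_rel2 ha]
      _ = kGen n i * wProd n (a :: l) := by simp [mul_assoc]

lemma eSet_eq_wProd (X : Finset (Fin n)) : eSet n X = wProd n (X.sort (· ≤ ·)).reverse := rfl

@[simp] lemma eSet_empty : eSet n (∅ : Finset (Fin n)) = 1 := by simp [eSet]

lemma sort_eq_append_max {X : Finset (Fin n)} {m : Fin n} (hm : m ∈ X)
    (hmax : ∀ x ∈ X, x ≤ m) :
    X.sort (· ≤ ·) = (X.erase m).sort (· ≤ ·) ++ [m] := by
  have : IsAntisymm (Fin n) (· ≤ ·) := inferInstance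
  refine (fun hp h1 h2 => List.Perm.eq_of_pairwise' (r := (· ≤ ·)) h1 h2 hp) ?_ ?_ ?_
  · have h1 : (X.sort (· ≤ ·)).Perm X.toList := Finset.sort_perm_toList _ _
    have h2 : X.toList.Perm (m :: (X.erase m).toList) := by
      conv_lhs => rw [← Finset.insert_erase hm]
      exact Finset.toList_insert (Finset.notMem_erase m X)
    have h3 : (m :: (X.erase m).toList).Perm (m :: (X.erase m).sort (· ≤ ·)) :=
      List.Perm.cons m (Finset.sort_perm_toList _ _).symm
    have h4 : (m :: (X.erase m).sort (· ≤ ·)).Perm ((X.erase m).sort (· ≤ ·) ++ [m]) :=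
      (List.perm_append_singleton _ _).symm
    exact ((h1.trans h2).trans h3).trans h4
  · exact Finset.pairwise_sort _ _
  · rw [List.pairwise_append]
    refine ⟨Finset.pairwise_sort _ _, List.pairwise_singleton _ m, ?_⟩
    intro x hx y hy
    simp only [List.mem_singleton] at hy
    subst hy
    exact hmax x (Finset.mem_of_mem_erase ((Finset.mem_sort _).mp hx))

lemma sort_eq_cons_min {X : Finset (Fin n)} {m : Fin n} (hm : m ∈ X)
    (hmin : ∀ x ∈ X, m ≤ x) :
    X.sort (· ≤ ·) = m :: (X.erase m).sort (· ≤ ·) := by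
  have : IsAntisymm (Fin n) (· ≤ ·) := inferInstance
  refine (fun hp h1 h2 => List.Perm.eq_of_pairwise' (r := (· ≤ ·)) h1 h2 hp) ?_ ?_ ?_
  · have h1 : (X.sort (· ≤ ·)).Perm X.toList := Finset.sort_perm_toList _ _
    have h2 : X.toList.Perm (m :: (X.erase m).toList) := by
      conv_lhs => rw [← Finset.insert_erase hm]
      exact Finset.toList_insert (Finset.notMem_erase m X)
    have h3 : (m :: (X.erase m).toList).Perm (m :: (X.erase m).sort (· ≤ ·)) :=
      List.Perm.cons m (Finset.sort_perm_toList _ _).symm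
    exact (h1.trans h2).trans h3
  · exact Finset.pairwise_sort _ _
  · rw [List.pairwise_cons]
    refine ⟨?_, Finset.pairwise_sort _ _⟩
    intro b hb
    exact hmin b (Finset.mem_of_mem_erase ((Finset.mem_sort _).mp hb))

lemma eSet_max {X : Finset (Fin n)} {m : Fin n} (hm : m ∈ X) (hmax : ∀ x ∈ X, x ≤ m) :
    eSet n X = kGen n m * eSet n (X.erase m) := by
  rw [eSet_eq_wProd, sort_eq_append_max hm hmax, List.reverse_append]
  simp [eSet_eq_wProd, wProd]

lemma eSet_min {X : Finset (Fin n)} {m : Fin n} (hm : m ∈ X) (hmin : ∀ x ∈ X, m ≤ x) :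
    eSet n X = eSet n (X.erase m) * kGen n m := by
  rw [eSet_eq_wProd, sort_eq_cons_min hm hmin, List.reverse_cons]
  simp [eSet_eq_wProd, wProd]

lemma absL (X : Finset (Fin n)) : ∀ b ∈ X, kGen n b * eSet n X = eSet n X := by
  induction X using Finset.strongInduction with
  | _ X ih =>
    intro b hb
    have hne : X.Nonempty := ⟨b, hb⟩
    have hmX : X.max' hne ∈ X := X.max'_mem hne
    set m := X.max' hne with hm_def
    have hmax : ∀ x ∈ X, x ≤ m := fun x hx => X.le_max' x hx
    rw [eSet_max hmX hmax]
    by_cases hbm : b = m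
    · subst hbm; rw [← mul_assoc, gen_sq]
    · have hbX' : b ∈ X.erase m := Finset.mem_erase.mpr ⟨hbm, hb⟩
      have hblt : b < m := lt_of_le_of_ne (hmax b hb) hbm
      have ih' := ih (X.erase m) (Finset.erase_ssubset hmX) b hbX'
      calc kGen n b * (kGen n m * eSet n (X.erase m))
          = kGen n b * (kGen n m * (kGen n b * eSet n (X.erase m))) := by rw [ih']
        _ = (kGen n b * kGen n m * kGen n b) * eSet n (X.erase m) := by simp [mul_assoc]
        _ = (kGen n m * kGen n b) * eSet n (X.erase m) := by rw [gen_rel1 hblt]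
        _ = kGen n m * (kGen n b * eSet n (X.erase m)) := by simp [mul_assoc]
        _ = kGen n m * eSet n (X.erase m) := by rw [ih']

lemma absR (X : Finset (Fin n)) : ∀ b ∈ X, eSet n X * kGen n b = eSet n X := by
  induction X using Finset.strongInduction with
  | _ X ih =>
    intro b hb
    have hne : X.Nonempty := ⟨b, hb⟩
    have hmX : X.min' hne ∈ X := X.min'_mem hne
    set m := X.min' hne with hm_def
    have hmin : ∀ x ∈ X, m ≤ x := fun x hx => X.min'_le x hx
    rw [eSet_min hmX hmin]
    by_cases hbm : b = m
    · subst hbm; rw [mul_assoc, gen_sq]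
    · have hbX' : b ∈ X.erase m := Finset.mem_erase.mpr ⟨hbm, hb⟩
      have hblt : m < b := lt_of_le_of_ne (hmin b hb) (Ne.symm hbm)
      have ih' := ih (X.erase m) (Finset.erase_ssubset hmX) b hbX'
      calc eSet n (X.erase m) * kGen n m * kGen n b
          = (eSet n (X.erase m) * kGen n b) * kGen n m * kGen n b := by rw [ih']
        _ = eSet n (X.erase m) * (kGen n b * kGen n m * kGen n b) := by simp [mul_assoc]
        _ = eSet n (X.erase m) * (kGen n b * kGen n m) := by rw [gen_rel2 hblt]
        _ = (eSet n (X.erase m) * kGen n b) * kGen n m := by simp [mul_assoc]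
        _ = eSet n (X.erase m) * kGen n m := by rw [ih']

lemma absProdL_aux (B : Finset (Fin n)) (l : List (Fin n)) (h : ∀ x ∈ l, x ∈ B) :
    wProd n l * eSet n B = eSet n B := by
  induction l with
  | nil => simp
  | cons a l ih =>
    have : wProd n (a :: l) * eSet n B = kGen n a * (wProd n l * eSet n B) := by
      simp [mul_assoc]
    rw [this, ih (fun x hx => h x (by simp [hx])), absL B a (h a (by simp))]

lemma absProdL {A B : Finset (Fin n)} (h : ∀ x ∈ A, x ∈ B) :
    eSet n A * eSet n B = eSet n B := by
  rw [eSet_eq_wProd A]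
  exact absProdL_aux B _ (fun x hx => h x (by simpa [Finset.mem_sort] using hx))

lemma absProdR_aux (B : Finset (Fin n)) (l : List (Fin n)) (h : ∀ x ∈ l, x ∈ B) :
    eSet n B * wProd n l = eSet n B := by
  induction l using List.reverseRecOn with
  | nil => simp
  | append_singleton l a ih =>
    have : eSet n B * wProd n (l ++ [a]) = (eSet n B * wProd n l) * kGen n a := by
      simp [mul_assoc]
    rw [this, ih (fun x hx => h x (by simp [hx])), absR B a (h a (by simp))]

lemma absProdR {A B : Finset (Fin n)} (h : ∀ x ∈ A, x ∈ B) :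
    eSet n B * eSet n A = eSet n B := by
  rw [eSet_eq_wProd A]
  exact absProdR_aux B _ (fun x hx => h x (by simpa [Finset.mem_sort] using hx))

lemma eSet_idem (X : Finset (Fin n)) : eSet n X * eSet n X = eSet n X :=
  absProdL (fun _ h => h)

lemma hi_e1 (i : Fin n) {A : Finset (Fin n)} (h : ∀ x ∈ A, i < x) :
    kGen n i * eSet n A * kGen n i = eSet n A * kGen n i := by
  rw [eSet_eq_wProd A]
  exact hi_word i _ (fun x hx => h x (by simpa [Finset.mem_sort] using hx))

lemma hi_e2 (i : Fin n) {A B : Finset (Fin n)} (hA : ∀ x ∈ A, i < x) (hB : ∀ x ∈ B, i < x) :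
    kGen n i * (eSet n A * eSet n B) * kGen n i = (eSet n A * eSet n B) * kGen n i := by
  have h : eSet n A * eSet n B
      = wProd n ((A.sort (· ≤ ·)).reverse ++ (B.sort (· ≤ ·)).reverse) := by
    rw [wProd_append, ← eSet_eq_wProd A, ← eSet_eq_wProd B]
  rw [h]
  refine hi_word i _ ?_
  intro x hx
  rcases List.mem_append.mp hx with hx | hx
  · exact hA x (by simpa [Finset.mem_sort] using hx)
  · exact hB x (by simpa [Finset.mem_sort] using hx)

lemma lo_e1 (i : Fin n) {A : Finset (Fin n)} (h : ∀ x ∈ A, x < i) :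
    kGen n i * eSet n A * kGen n i = kGen n i * eSet n A := by
  rw [eSet_eq_wProd A]
  exact lo_word i _ (fun x hx => h x (by simpa [Finset.mem_sort] using hx))

lemma lo_e2 (i : Fin n) {A B : Finset (Fin n)} (hA : ∀ x ∈ A, x < i) (hB : ∀ x ∈ B, x < i) :
    kGen n i * (eSet n A * eSet n B) * kGen n i = kGen n i * (eSet n A * eSet n B) := by
  have h : eSet n A * eSet n B
      = wProd n ((A.sort (· ≤ ·)).reverse ++ (B.sort (· ≤ ·)).reverse) := by
    rw [wProd_append, ← eSet_eq_wProd A, ← eSet_eq_wProd B]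
  rw [h]
  refine lo_word i _ ?_
  intro x hx
  rcases List.mem_append.mp hx with hx | hx
  · exact hA x (by simpa [Finset.mem_sort] using hx)
  · exact hB x (by simpa [Finset.mem_sort] using hx)

lemma erase_sdiff_erase {A B : Finset (Fin n)} {μ x : Fin n}
    (h : x ∈ B.erase μ \ A.erase μ) : x ∈ B \ A := by
  simp only [Finset.mem_sdiff, Finset.mem_erase] at h ⊢
  tauto

lemma sdiff_erase_left {A B : Finset (Fin n)} {μ x : Fin n} (hμ : μ ∉ B)
    (h : x ∈ B \ A.erase μ) : x ∈ B \ A := by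
  simp only [Finset.mem_sdiff, Finset.mem_erase] at h ⊢
  refine ⟨h.1, fun hxA => h.2 ⟨fun he => hμ (he ▸ h.1), hxA⟩⟩

lemma sdiff_erase_right {A B : Finset (Fin n)} {μ x : Fin n} (hμ : μ ∉ A)
    (h : x ∈ A \ B.erase μ) : x ∈ A \ B := by
  simp only [Finset.mem_sdiff, Finset.mem_erase] at h ⊢
  refine ⟨h.1, fun hxB => h.2 ⟨fun he => hμ (he ▸ h.1), hxB⟩⟩

lemma erase_sdiff_left' {A B : Finset (Fin n)} {μ x : Fin n}
    (h : x ∈ A.erase μ \ B) : x ∈ A \ B := by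
  simp only [Finset.mem_sdiff, Finset.mem_erase] at h ⊢
  tauto

lemma main1 : ∀ (k : ℕ) (A B : Finset (Fin n)), (A ∪ B).card ≤ k →
    (∀ x ∈ B \ A, ∀ y ∈ A \ B, y < x) →
    eSet n A * eSet n B * eSet n A = eSet n B * eSet n A := by
  intro k
  induction k with
  | zero =>
    intro A B hcard _
    obtain ⟨hA, hB⟩ := Finset.union_eq_empty.mp
      (Finset.card_eq_zero.mp (Nat.le_zero.mp hcard))
    subst hA; subst hB; simp
  | succ k ih =>
    intro A B hcard hc
    rcases Finset.eq_empty_or_nonempty (A ∪ B) with hAB | hne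
    · obtain ⟨hA, hB⟩ := Finset.union_eq_empty.mp hAB
      subst hA; subst hB; simp
    have hμmem : (A ∪ B).min' hne ∈ A ∪ B := Finset.min'_mem _ _
    set μ := (A ∪ B).min' hne with hμdef
    have hμle : ∀ x ∈ A ∪ B, μ ≤ x := fun x hx => Finset.min'_le _ x hx
    have hcard' : ((A ∪ B).erase μ).card ≤ k := by
      have := Finset.card_erase_of_mem hμmem
      omega
    by_cases hμA : μ ∈ A
    · have hAeq : eSet n A = eSet n (A.erase μ) * kGen n μ :=
        eSet_min hμA (fun x hx => hμle x (Finset.mem_union_left _ hx))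
      have hgtA : ∀ x ∈ A.erase μ, μ < x := fun x hx =>
        lt_of_le_of_ne (hμle x (Finset.mem_union_left _ (Finset.mem_of_mem_erase hx)))
          (Ne.symm (Finset.ne_of_mem_erase hx))
      by_cases hμB : μ ∈ B
      · -- μ ∈ A ∩ B
        have hBeq : eSet n B = eSet n (B.erase μ) * kGen n μ :=
          eSet_min hμB (fun x hx => hμle x (Finset.mem_union_right _ hx))
        have hgtB : ∀ x ∈ B.erase μ, μ < x := fun x hx =>
          lt_of_le_of_ne (hμle x (Finset.mem_union_right _ (Finset.mem_of_mem_erase hx)))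
            (Ne.symm (Finset.ne_of_mem_erase hx))
        have h1 := hi_e1 μ hgtB
        have h2 := hi_e1 μ hgtA
        have hcard'' : (A.erase μ ∪ B.erase μ).card ≤ k := by
          rw [Finset.erase_union_distrib] at hcard'
          exact hcard'
        have ihm := ih (A.erase μ) (B.erase μ) hcard''
          (fun x hx y hy => hc x (erase_sdiff_erase hx) y (erase_sdiff_erase hy))
        set a := eSet n (A.erase μ)
        set b := eSet n (B.erase μ)
        set u := kGen n μ
        rw [hAeq, hBeq]
        calc ((a*u)*(b*u))*(a*u)
            = a*((u*b*u)*(a*u)) := by simp [mul_assoc]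
          _ = a*((b*u)*(a*u)) := by rw [h1]
          _ = (a*b)*(u*a*u) := by simp [mul_assoc]
          _ = (a*b)*(a*u) := by rw [h2]
          _ = (a*b*a)*u := by simp [mul_assoc]
          _ = (b*a)*u := by rw [ihm]
          _ = b*(a*u) := by simp [mul_assoc]
          _ = b*(u*a*u) := by rw [h2]
          _ = (b*u)*(a*u) := by simp [mul_assoc]
      · -- μ ∈ A \ B
        have hgtB : ∀ x ∈ B, μ < x := fun x hx =>
          lt_of_le_of_ne (hμle x (Finset.mem_union_right _ hx))
            (fun he => hμB (he ▸ hx))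
        have h1 := hi_e2 μ hgtB hgtA
        have hcard'' : (A.erase μ ∪ B).card ≤ k := by
          rw [Finset.erase_union_distrib, Finset.erase_eq_of_notMem hμB] at hcard'
          exact hcard'
        have ihm := ih (A.erase μ) B hcard''
          (fun x hx y hy => hc x (sdiff_erase_left hμB hx) y (erase_sdiff_left' hy))
        set a := eSet n (A.erase μ)
        set eB := eSet n B
        set u := kGen n μ
        rw [hAeq]
        calc ((a*u)*eB)*(a*u)
            = a*((u*(eB*a)*u)) := by simp [mul_assoc]
          _ = a*((eB*a)*u) := by rw [h1]
          _ = ((a*eB)*a)*u := by simp [mul_assoc]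
          _ = (eB*a)*u := by rw [ihm]
          _ = eB*(a*u) := by simp [mul_assoc]
    · -- μ ∈ B \ A : then A ⊆ B
      have hμB : μ ∈ B := (Finset.mem_union.mp hμmem).resolve_left hμA
      have hsub : ∀ y ∈ A, y ∈ B := by
        intro y hy
        by_contra hyB
        have := hc μ (Finset.mem_sdiff.mpr ⟨hμB, hμA⟩) y (Finset.mem_sdiff.mpr ⟨hy, hyB⟩)
        exact absurd (hμle y (Finset.mem_union_left _ hy)) (not_le.mpr this)
      rw [absProdL hsub]

lemma main2 : ∀ (k : ℕ) (A B : Finset (Fin n)), (A ∪ B).card ≤ k →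
    (∀ x ∈ B \ A, ∀ y ∈ A \ B, y < x) →
    eSet n B * eSet n A * eSet n B = eSet n B * eSet n A := by
  intro k
  induction k with
  | zero =>
    intro A B hcard _
    obtain ⟨hA, hB⟩ := Finset.union_eq_empty.mp
      (Finset.card_eq_zero.mp (Nat.le_zero.mp hcard))
    subst hA; subst hB; simp
  | succ k ih =>
    intro A B hcard hc
    rcases Finset.eq_empty_or_nonempty (A ∪ B) with hAB | hne
    · obtain ⟨hA, hB⟩ := Finset.union_eq_empty.mp hAB
      subst hA; subst hB; simp
    have hmmem : (A ∪ B).max' hne ∈ A ∪ B := Finset.max'_mem _ _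
    set m := (A ∪ B).max' hne with hmdef
    have hmle : ∀ x ∈ A ∪ B, x ≤ m := fun x hx => Finset.le_max' _ x hx
    have hcard' : ((A ∪ B).erase m).card ≤ k := by
      have := Finset.card_erase_of_mem hmmem
      omega
    by_cases hmB : m ∈ B
    · have hBeq : eSet n B = kGen n m * eSet n (B.erase m) :=
        eSet_max hmB (fun x hx => hmle x (Finset.mem_union_right _ hx))
      have hltB : ∀ x ∈ B.erase m, x < m := fun x hx =>
        lt_of_le_of_ne (hmle x (Finset.mem_union_right _ (Finset.mem_of_mem_erase hx)))
          (Finset.ne_of_mem_erase hx)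
      by_cases hmA : m ∈ A
      · -- m ∈ A ∩ B
        have hAeq : eSet n A = kGen n m * eSet n (A.erase m) :=
          eSet_max hmA (fun x hx => hmle x (Finset.mem_union_left _ hx))
        have hltA : ∀ x ∈ A.erase m, x < m := fun x hx =>
          lt_of_le_of_ne (hmle x (Finset.mem_union_left _ (Finset.mem_of_mem_erase hx)))
            (Finset.ne_of_mem_erase hx)
        have lo1 := lo_e1 m hltB
        have lo2 := lo_e2 m hltB hltA
        have hcard'' : (A.erase m ∪ B.erase m).card ≤ k := by
          rw [Finset.erase_union_distrib] at hcard'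
          exact hcard'
        have ihm := ih (A.erase m) (B.erase m) hcard''
          (fun x hx y hy => hc x (erase_sdiff_erase hx) y (erase_sdiff_erase hy))
        set a := eSet n (A.erase m)
        set b := eSet n (B.erase m)
        set u := kGen n m
        rw [hAeq, hBeq]
        calc ((u*b)*(u*a))*(u*b)
            = ((u*b*u)*a)*(u*b) := by simp [mul_assoc]
          _ = ((u*b)*a)*(u*b) := by rw [lo1]
          _ = (u*(b*a)*u)*b := by simp [mul_assoc]
          _ = (u*(b*a))*b := by rw [lo2]
          _ = u*((b*a)*b) := by simp [mul_assoc]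
          _ = u*(b*a) := by rw [ihm]
          _ = (u*b)*a := by simp [mul_assoc]
          _ = (u*b*u)*a := by rw [lo1]
          _ = (u*b)*(u*a) := by simp [mul_assoc]
      · -- m ∈ B \ A
        have hltA : ∀ x ∈ A, x < m := fun x hx =>
          lt_of_le_of_ne (hmle x (Finset.mem_union_left _ hx))
            (fun he => hmA (he ▸ hx))
        have lo2 := lo_e2 m hltB hltA
        have hcard'' : (A ∪ B.erase m).card ≤ k := by
          rw [Finset.erase_union_distrib, Finset.erase_eq_of_notMem hmA] at hcard'
          exact hcard'
        have ihm := ih A (B.erase m) hcard''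
          (fun x hx y hy => hc x (erase_sdiff_left' hx) y (sdiff_erase_right hmA hy))
        set b := eSet n (B.erase m)
        set eA := eSet n A
        set u := kGen n m
        rw [hBeq]
        calc ((u*b)*eA)*(u*b)
            = (u*(b*eA)*u)*b := by simp [mul_assoc]
          _ = (u*(b*eA))*b := by rw [lo2]
          _ = u*((b*eA)*b) := by simp [mul_assoc]
          _ = u*(b*eA) := by rw [ihm]
          _ = (u*b)*eA := by simp [mul_assoc]
    · -- m ∈ A \ B : then B ⊆ A
      have hmA : m ∈ A := (Finset.mem_union.mp hmmem).resolve_right hmB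
      have hsub : ∀ y ∈ B, y ∈ A := by
        intro y hy
        by_contra hyA
        have := hc y (Finset.mem_sdiff.mpr ⟨hy, hyA⟩) m (Finset.mem_sdiff.mpr ⟨hmA, hmB⟩)
        exact absurd (hmle y (Finset.mem_union_right _ hy)) (not_le.mpr this)
      rw [mul_assoc, absProdR hsub]

/-- A tuple of subsets of `{1,...,n}` is monotone if for `i < j`, every element of
`X j \ X i` exceeds every element of `X i \ X j`. -/
def Mono (n : ℕ) (X : Fin n → Finset (Fin n)) : Prop :=
  ∀ i j : Fin n, i < j → ∀ x ∈ X j \ X i, ∀ y ∈ X i \ X j, y < x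

/-- Every monotone tuple gives rise to a unique endomorphism of `K_n` sending `a_i` to
`e_{X_i}`. -/
theorem exists_unique_endo (n : ℕ) (X : Fin n → Finset (Fin n)) (hX : Mono n X) :
    ∃! φ : Kiselman n →* Kiselman n, ∀ i : Fin n, φ (kGen n i) = eSet n (X i) := by
  have hrel : ∀ a b, kiselmanRel n a b →
      FreeMonoid.lift (fun i => eSet n (X i)) a = FreeMonoid.lift (fun i => eSet n (X i)) b := by
    rintro a b (⟨i, rfl, rfl⟩ | ⟨i, j, hij, rfl, rfl⟩ | ⟨i, j, hij, rfl, rfl⟩) <;>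
      simp only [map_mul, FreeMonoid.lift_eval_of]
    · exact eSet_idem (X i)
    · exact main1 _ (X i) (X j) le_rfl (hX i j hij)
    · exact main2 _ (X i) (X j) le_rfl (hX i j hij)
  refine ⟨PresentedMonoid.lift _ hrel, fun i => PresentedMonoid.lift_of _ hrel, ?_⟩
  intro ψ hψ
  exact PresentedMonoid.ext _ (fun i => (hψ i).trans (PresentedMonoid.lift_of _ hrel (x := i)).symm)
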